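/- For finitely many finite measures μ₁,…,μ_n with finite first moments and closed sets F₁ ⊇ F₂ ⊇ … ⊇ F_n, setting ν = μ₁K^{F₁} + … + μ_nK^{F_n}, one has for every 1 ≤ k ≤ n: S^ν(μ₁ + … + μ_k) = μ₁K^{F₁} + … + μ_kK^{F_k}. -/

import Mathlib

open MeasureTheory Set Filter Topology

/-- Convex order: `∫ φ dμ ≤ ∫ φ dν` for all convex `φ` for which both integrals exist. -/
def ConvexOrder (μ ν : MeasureTheory.Measure ℝ) : Prop :=
  ∀ φ : ℝ → ℝ, ConvexOn ℝ Set.univ φ → MeasureTheory.Integrable φ μ →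
    MeasureTheory.Integrable φ ν → ∫ x, φ x ∂μ ≤ ∫ x, φ x ∂ν

/-- `ξ` is the shadow of `η` in `ν`. -/
def IsShadow (ν η ξ : MeasureTheory.Measure ℝ) : Prop :=
  ConvexOrder η ξ ∧ ξ ≤ ν ∧
    ∀ ξ' : MeasureTheory.Measure ℝ, ConvexOrder η ξ' → ξ' ≤ ν → ConvexOrder ξ ξ'

open Classical in
/-- The Kellerer dilation kernel associated to a closed set `F`. -/
noncomputable def kellererKernel (F : Set ℝ) (x : ℝ) : MeasureTheory.Measure ℝ :=
  if x ∈ F then MeasureTheory.Measure.dirac x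
  else
    ENNReal.ofReal ((sInf (F ∩ Set.Ici x) - x) / (sInf (F ∩ Set.Ici x) - sSup (F ∩ Set.Iic x)))
        • MeasureTheory.Measure.dirac (sSup (F ∩ Set.Iic x))
      + ENNReal.ofReal ((x - sSup (F ∩ Set.Iic x)) / (sInf (F ∩ Set.Ici x) - sSup (F ∩ Set.Iic x)))
        • MeasureTheory.Measure.dirac (sInf (F ∩ Set.Ici x))

/-- `η K^F`, the image of `η` under the Kellerer dilation. -/
noncomputable def dilate (η : MeasureTheory.Measure ℝ) (F : Set ℝ) : MeasureTheory.Measure ℝ :=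
  η.bind (kellererKernel F)

open scoped ENNReal

namespace ShadowAux

noncomputable def sF (F : Set ℝ) (x : ℝ) : ℝ := sSup (F ∩ Set.Iic x)
noncomputable def tF (F : Set ℝ) (x : ℝ) : ℝ := sInf (F ∩ Set.Ici x)
noncomputable def rF (F : Set ℝ) (x : ℝ) : ℝ := (tF F x - x) / (tF F x - sF F x)
noncomputable def rF' (F : Set ℝ) (x : ℝ) : ℝ := (x - sF F x) / (tF F x - sF F x)

open Classical in
lemma kk_def (F : Set ℝ) (x : ℝ) : kellererKernel F x =
    if x ∈ F then Measure.dirac x else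
      ENNReal.ofReal (rF F x) • Measure.dirac (sF F x)
        + ENNReal.ofReal (rF' F x) • Measure.dirac (tF F x) := rfl

lemma measurable_sF (F : Set ℝ) (hF : IsClosed F) : Measurable (sF F) := by
  rcases eq_empty_or_nonempty F with rfl | hne
  · have : sF (∅ : Set ℝ) = fun _ => (0:ℝ) := by
      funext x; simp [sF, Real.sSup_empty]
    rw [this]; exact measurable_const
  by_cases hbd : BddBelow F
  · set c := sInf F with hc
    have hcF : c ∈ F := hF.csInf_mem hne hbd
    have key : sF F = fun x => if c ≤ x then sSup (F ∩ Iic (max x c)) else 0 := by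
      funext x
      by_cases hx : c ≤ x
      · rw [if_pos hx, sF, max_eq_left hx]
      · rw [if_neg hx]
        have he : F ∩ Iic x = ∅ := by
          ext y
          simp only [mem_inter_iff, mem_Iic, mem_empty_iff_false, iff_false, not_and]
          intro hyF hyx
          exact hx ((csInf_le hbd hyF).trans hyx)
        rw [sF, he, Real.sSup_empty]
    rw [key]
    have hm : Monotone fun x => sSup (F ∩ Iic (max x c)) := by
      intro x y hxy
      have hB : BddAbove (F ∩ Iic (max y c)) := ⟨max y c, fun z hz => hz.2⟩
      have hN : (F ∩ Iic (max x c)).Nonempty := ⟨c, hcF, mem_Iic.2 (le_max_right _ _)⟩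
      exact csSup_le_csSup hB hN
        (inter_subset_inter_right _ (Iic_subset_Iic.2 (max_le_max hxy le_rfl)))
    exact Measurable.ite measurableSet_Ici hm.measurable measurable_const
  · have h : ∀ x, (F ∩ Iic x).Nonempty := by
      intro x
      rcases not_bddBelow_iff.1 hbd x with ⟨y, hyF, hyx⟩
      exact ⟨y, hyF, hyx.le⟩
    have hm : Monotone (sF F) := by
      intro x y hxy
      have hB : BddAbove (F ∩ Iic y) := ⟨y, fun z hz => hz.2⟩
      exact csSup_le_csSup hB (h x)
        (inter_subset_inter_right _ (Iic_subset_Iic.2 hxy))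
    exact hm.measurable

lemma measurable_tF (F : Set ℝ) (hF : IsClosed F) : Measurable (tF F) := by
  rcases eq_empty_or_nonempty F with rfl | hne
  · have : tF (∅ : Set ℝ) = fun _ => (0:ℝ) := by
      funext x; simp [tF, Real.sInf_empty]
    rw [this]; exact measurable_const
  by_cases hbd : BddAbove F
  · set c := sSup F with hc
    have hcF : c ∈ F := hF.csSup_mem hne hbd
    have key : tF F = fun x => if x ≤ c then sInf (F ∩ Ici (min x c)) else 0 := by
      funext x
      by_cases hx : x ≤ c
      · rw [if_pos hx, tF, min_eq_left hx]
      · rw [if_neg hx]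
        have he : F ∩ Ici x = ∅ := by
          ext y
          simp only [mem_inter_iff, mem_Ici, mem_empty_iff_false, iff_false, not_and]
          intro hyF hyx
          exact hx (hyx.trans (le_csSup hbd hyF))
        rw [tF, he, Real.sInf_empty]
    rw [key]
    have hm : Monotone fun x => sInf (F ∩ Ici (min x c)) := by
      intro x y hxy
      have hB : BddBelow (F ∩ Ici (min x c)) := ⟨min x c, fun z hz => hz.2⟩
      have hN : (F ∩ Ici (min y c)).Nonempty := ⟨c, hcF, mem_Ici.2 (min_le_right _ _)⟩
      exact csInf_le_csInf hB hN
        (inter_subset_inter_right _ (Ici_subset_Ici.2 (min_le_min hxy le_rfl)))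
    exact Measurable.ite measurableSet_Iic hm.measurable measurable_const
  · have h : ∀ x, (F ∩ Ici x).Nonempty := by
      intro x
      rcases not_bddAbove_iff.1 hbd x with ⟨y, hyF, hyx⟩
      exact ⟨y, hyF, hyx.le⟩
    have hm : Monotone (tF F) := by
      intro x y hxy
      have hB : BddBelow (F ∩ Ici x) := ⟨x, fun z hz => hz.2⟩
      exact csInf_le_csInf hB (h y)
        (inter_subset_inter_right _ (Ici_subset_Ici.2 hxy))
    exact hm.measurable

lemma measurable_rF (F : Set ℝ) (hF : IsClosed F) : Measurable (rF F) :=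
  ((measurable_tF F hF).sub measurable_id).div
    ((measurable_tF F hF).sub (measurable_sF F hF))

lemma measurable_rF' (F : Set ℝ) (hF : IsClosed F) : Measurable (rF' F) :=
  (measurable_id.sub (measurable_sF F hF)).div
    ((measurable_tF F hF).sub (measurable_sF F hF))

open Classical in
lemma measurable_kk (F : Set ℝ) (hF : IsClosed F) : Measurable (kellererKernel F) := by
  apply Measure.measurable_of_measurable_coe
  intro s hs
  have key : (fun b => kellererKernel F b s) = fun b =>
      if b ∈ F then s.indicator (fun _ => (1:ℝ≥0∞)) b
      else ENNReal.ofReal (rF F b) * s.indicator (fun _ => (1:ℝ≥0∞)) (sF F b)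
        + ENNReal.ofReal (rF' F b) * s.indicator (fun _ => (1:ℝ≥0∞)) (tF F b) := by
    funext b
    rw [kk_def]
    split_ifs with h
    · rw [Measure.dirac_apply' _ hs]; rfl
    · simp only [Measure.add_apply, Measure.smul_apply, smul_eq_mul,
        Measure.dirac_apply' _ hs]
      rfl
  rw [key]
  apply Measurable.ite hF.measurableSet
  · exact measurable_one.indicator hs
  · exact ((measurable_rF F hF).ennreal_ofReal.mul
      ((measurable_one.indicator hs).comp (measurable_sF F hF))).add
      ((measurable_rF' F hF).ennreal_ofReal.mul
      ((measurable_one.indicator hs).comp (measurable_tF F hF)))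

open Classical in
lemma lintegral_dilate (F : Set ℝ) (hF : IsClosed F) (μ : Measure ℝ) {g : ℝ → ℝ≥0∞}
    (hg : Measurable g) :
    ∫⁻ y, g y ∂(dilate μ F) = ∫⁻ x, (if x ∈ F then g x else
      ENNReal.ofReal (rF F x) * g (sF F x) + ENNReal.ofReal (rF' F x) * g (tF F x)) ∂μ := by
  rw [dilate, Measure.lintegral_bind (measurable_kk F hF).aemeasurable hg.aemeasurable]
  congr 1
  funext x
  rw [kk_def]
  split_ifs with h
  · exact lintegral_dirac' _ hg
  · rw [lintegral_add_measure, lintegral_smul_measure, lintegral_smul_measure,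
      lintegral_dirac' _ hg, lintegral_dirac' _ hg, smul_eq_mul, smul_eq_mul]

end ShadowAux

namespace ShadowAux

noncomputable def chord (φ : ℝ → ℝ) (c d : ℝ) : ℝ → ℝ :=
  fun y => φ c + (φ d - φ c) / (d - c) * (y - c)

lemma convexOn_affine (m q : ℝ) : ConvexOn ℝ univ (fun y : ℝ => m * y + q) := by
  refine ⟨convex_univ, ?_⟩
  intro x _ y _ a b _ _ hab
  simp only [smul_eq_mul]
  have h2 : a * (m * x + q) + b * (m * y + q) = m * (a * x + b * y) + (a + b) * q := by ring
  rw [hab, one_mul] at h2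
  exact le_of_eq h2.symm

lemma convexOn_chord (φ : ℝ → ℝ) (c d : ℝ) : ConvexOn ℝ univ (chord φ c d) := by
  have : chord φ c d = fun y => ((φ d - φ c) / (d - c)) * y
      + (φ c - (φ d - φ c) / (d - c) * c) := by
    funext y; simp only [chord]; ring
  rw [this]
  exact convexOn_affine _ _

lemma chord_left (φ : ℝ → ℝ) (c d : ℝ) : chord φ c d c = φ c := by
  simp [chord]

lemma chord_right (φ : ℝ → ℝ) {c d : ℝ} (h : c ≠ d) : chord φ c d d = φ d := by
  have hdc : d - c ≠ 0 := sub_ne_zero.2 (Ne.symm h)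
  simp only [chord]; rw [div_mul_cancel₀ _ hdc]; ring

lemma combo_le {φ : ℝ → ℝ} (hφ : ConvexOn ℝ univ φ) {a b x : ℝ} (hab : a < b)
    (h1 : a ≤ x) (h2 : x ≤ b) :
    φ x ≤ (b - x) / (b - a) * φ a + (x - a) / (b - a) * φ b := by
  have hba : (0:ℝ) < b - a := by linarith
  have hsum : (b - x) / (b - a) + (x - a) / (b - a) = 1 := by field_simp; ring
  have hx' : ((b - x) / (b - a)) • a + ((x - a) / (b - a)) • b = x := by
    simp only [smul_eq_mul]; field_simp; ring
  have := hφ.2 (mem_univ a) (mem_univ b)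
    (div_nonneg (by linarith) hba.le) (div_nonneg (by linarith) hba.le) hsum
  rw [hx'] at this
  simpa [smul_eq_mul] using this

lemma chord_eq_combo (φ : ℝ → ℝ) {c d : ℝ} (h : c < d) (y : ℝ) :
    chord φ c d y = (d - y) / (d - c) * φ c + (y - c) / (d - c) * φ d := by
  have hdc : d - c ≠ 0 := sub_ne_zero.2 (ne_of_gt h)
  simp only [chord]; field_simp
  ring

lemma chord_ge_inside {φ : ℝ → ℝ} (hφ : ConvexOn ℝ univ φ) {c d : ℝ} (h : c < d)
    {y : ℝ} (h1 : c ≤ y) (h2 : y ≤ d) : φ y ≤ chord φ c d y := by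
  rw [chord_eq_combo φ h]
  exact combo_le hφ h h1 h2

lemma chord_le_outside {φ : ℝ → ℝ} (hφ : ConvexOn ℝ univ φ) {c d : ℝ} (h : c < d)
    {y : ℝ} (hy : y ≤ c ∨ d ≤ y) : chord φ c d y ≤ φ y := by
  rcases hy with hy | hy
  · rcases eq_or_lt_of_le hy with rfl | hy
    · rw [chord_left]
    · -- y < c < d
      have hs := hφ.slope_mono_adjacent (mem_univ y) (mem_univ d) hy h
      have hcy : (0:ℝ) < c - y := by linarith
      have hdc : (0:ℝ) < d - c := by linarith
      rw [div_le_div_iff₀ hcy hdc] at hs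
      have : (φ d - φ c) / (d - c) * (y - c) ≤ φ y - φ c := by
        rw [div_mul_eq_mul_div, div_le_iff₀ hdc]
        nlinarith
      simp only [chord]; linarith
  · rcases eq_or_lt_of_le hy with rfl | hy
    · rw [chord_right φ (ne_of_lt h)]
    · -- c < d < y
      have hs := hφ.slope_mono_adjacent (mem_univ c) (mem_univ y) h hy
      have hdc : (0:ℝ) < d - c := by linarith
      have hyd : (0:ℝ) < y - d := by linarith
      rw [div_le_div_iff₀ hdc hyd] at hs
      have : (φ d - φ c) / (d - c) * (y - c) ≤ φ y - φ c := by
        rw [div_mul_eq_mul_div, div_le_iff₀ hdc]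
        nlinarith
      simp only [chord]; linarith

lemma convex_lower {φ : ℝ → ℝ} (hφ : ConvexOn ℝ univ φ) :
    ∃ C : ℝ, 0 ≤ C ∧ ∀ x, φ 0 - C * |x| ≤ φ x := by
  set a := φ 0 - φ (-1) with ha
  set b := φ 1 - φ 0 with hb
  refine ⟨max |a| |b|, le_trans (abs_nonneg a) (le_max_left _ _), ?_⟩
  intro x
  rcases lt_trichotomy x 0 with hx | rfl | hx
  · -- x < 0 : slope (x,0,1)
    have hs := hφ.slope_mono_adjacent (mem_univ x) (mem_univ 1) hx one_pos
    have h0x : (0:ℝ) < 0 - x := by linarith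
    have : (φ 0 - φ x) / (0 - x) ≤ b := by
      simpa [hb] using hs
    rw [div_le_iff₀ h0x] at this
    have habs : b * (0 - x) ≤ max |a| |b| * |x| := by
      have h1 : b * (0 - x) ≤ |b| * |x| := by
        calc b * (0 - x) ≤ |b| * (0 - x) := by
              apply mul_le_mul_of_nonneg_right (le_abs_self b) h0x.le
          _ = |b| * |x| := by rw [abs_of_neg hx]; ring
      exact h1.trans (mul_le_mul_of_nonneg_right (le_max_right _ _) (abs_nonneg x))
    linarith
  · simp
  · -- 0 < x : slope (-1,0,x)
    have hs := hφ.slope_mono_adjacent (mem_univ (-1)) (mem_univ x) (by norm_num) hx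
    have : a ≤ (φ x - φ 0) / (x - 0) := by
      simpa [ha] using hs
    rw [le_div_iff₀ (by linarith : (0:ℝ) < x - 0)] at this
    have habs : -(max |a| |b| * |x|) ≤ a * (x - 0) := by
      have h1 : -(|a| * |x|) ≤ a * (x - 0) := by
        have : -|a| * x ≤ a * x := by
          apply mul_le_mul_of_nonneg_right (neg_abs_le a) hx.le
        rw [abs_of_pos hx]; linarith
      have h2 : max |a| |b| * |x| ≥ |a| * |x| :=
        mul_le_mul_of_nonneg_right (le_max_left _ _) (abs_nonneg x)
      linarith
    linarith

lemma convex_continuous {φ : ℝ → ℝ} (hφ : ConvexOn ℝ univ φ) : Continuous φ := by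
  have := ConvexOn.continuousOn isOpen_univ hφ
  rwa [continuousOn_univ] at this

/-- `GapOf Fb c d`: `(c,d)` is a (bounded) gap of `Fb`. -/
def GapOf (Fb : Set ℝ) (c d : ℝ) : Prop :=
  c ∈ Fb ∧ d ∈ Fb ∧ c < d ∧ ∀ z ∈ Ioo c d, z ∉ Fb

lemma gapOf_eq_of_mem {Fb : Set ℝ} {c d c' d' z : ℝ} (h : GapOf Fb c d) (h' : GapOf Fb c' d')
    (hz : z ∈ Ioo c d) (hz' : z ∈ Ioo c' d') : c = c' ∧ d = d' := by
  obtain ⟨hc, hd, hcd, hgap⟩ := h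
  obtain ⟨hc', hd', hcd', hgap'⟩ := h'
  have hc'd : c' < d := lt_trans hz'.1 hz.2
  have hcd'2 : c < d' := lt_trans hz.1 hz'.2
  constructor
  · have hA : ¬ c < c' := fun hh => hgap c' ⟨hh, hc'd⟩ hc'
    have hB : ¬ c' < c := fun hh => hgap' c ⟨hh, hcd'2⟩ hc
    exact le_antisymm (not_lt.1 hB) (not_lt.1 hA)
  · have hA : ¬ d' < d := fun hh => hgap d' ⟨hcd'2, hh⟩ hd'
    have hB : ¬ d < d' := fun hh => hgap' d ⟨hc'd, hh⟩ hd
    exact le_antisymm (not_lt.1 hA) (not_lt.1 hB)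

end ShadowAux

namespace ShadowAux

def Valid (Fb : Set ℝ) (y : ℝ) : Prop :=
  y ∉ Fb ∧ (Fb ∩ Iic y).Nonempty ∧ (Fb ∩ Ici y).Nonempty

lemma valid_gap {Fb : Set ℝ} (hFb : IsClosed Fb) {y : ℝ} (hv : Valid Fb y) :
    GapOf Fb (sF Fb y) (tF Fb y) ∧ sF Fb y < y ∧ y < tF Fb y := by
  obtain ⟨h1, h2, h3⟩ := hv
  have hsB : BddAbove (Fb ∩ Iic y) := ⟨y, fun z hz => hz.2⟩
  have htB : BddBelow (Fb ∩ Ici y) := ⟨y, fun z hz => hz.2⟩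
  have hs_mem : sF Fb y ∈ Fb ∩ Iic y := (hFb.inter isClosed_Iic).csSup_mem h2 hsB
  have ht_mem : tF Fb y ∈ Fb ∩ Ici y := (hFb.inter isClosed_Ici).csInf_mem h3 htB
  have hs_lt : sF Fb y < y :=
    lt_of_le_of_ne hs_mem.2 fun he => h1 (by rw [← he]; exact hs_mem.1)
  have ht_gt : y < tF Fb y :=
    lt_of_le_of_ne ht_mem.2 fun he => h1 (by rw [he]; exact ht_mem.1)
  refine ⟨⟨hs_mem.1, ht_mem.1, hs_lt.trans ht_gt, ?_⟩, hs_lt, ht_gt⟩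
  intro z hz hzF
  rcases le_or_gt z y with hle | hlt
  · exact absurd (le_csSup hsB ⟨hzF, hle⟩) (not_le.2 hz.1)
  · exact absurd (csInf_le htB ⟨hzF, hlt.le⟩) (not_le.2 hz.2)

lemma valid_of_mem_gap {Fb : Set ℝ} (hFb : IsClosed Fb) {c d z : ℝ} (hg : GapOf Fb c d)
    (hz : z ∈ Ioo c d) : Valid Fb z ∧ sF Fb z = c ∧ tF Fb z = d := by
  have hv : Valid Fb z := ⟨hg.2.2.2 z hz, ⟨c, hg.1, hz.1.le⟩, ⟨d, hg.2.1, hz.2.le⟩⟩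
  obtain ⟨hgap', hlt1, hlt2⟩ := valid_gap hFb hv
  have := gapOf_eq_of_mem hgap' hg ⟨hlt1, hlt2⟩ hz
  exact ⟨hv, this.1, this.2⟩

open Classical in
noncomputable def Lq (φ : ℝ → ℝ) (Fb : Set ℝ) (q : ℚ) : ℝ → ℝ :=
  if Valid Fb (q : ℝ) then chord φ (sF Fb (q:ℝ)) (tF Fb (q:ℝ)) else φ

noncomputable def chi (φ : ℝ → ℝ) (Fb : Set ℝ) (Q : Finset ℚ) (y : ℝ) : ℝ :=
  Q.fold max (φ y) (fun q => Lq φ Fb q y)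

lemma chi_apply_insert (φ : ℝ → ℝ) (Fb : Set ℝ) {a : ℚ} {s : Finset ℚ} (h : a ∉ s) (y : ℝ) :
    chi φ Fb (insert a s) y = max (Lq φ Fb a y) (chi φ Fb s y) := by
  rw [chi, Finset.fold_insert h]; rfl

lemma chi_convex {φ : ℝ → ℝ} (hφ : ConvexOn ℝ univ φ) (Fb : Set ℝ) (Q : Finset ℚ) :
    ConvexOn ℝ univ (chi φ Fb Q) := by
  induction Q using Finset.induction with
  | empty =>
    have h0 : chi φ Fb ∅ = φ := by funext y; simp [chi]
    rw [h0]; exact hφ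
  | @insert a s h ih =>
    have he : chi φ Fb (insert a s) = fun y => max (Lq φ Fb a y) (chi φ Fb s y) := by
      funext y; exact chi_apply_insert φ Fb h y
    rw [he]
    have hL : ConvexOn ℝ univ (Lq φ Fb a) := by
      unfold Lq; split_ifs with hv
      · exact convexOn_chord φ _ _
      · exact hφ
    have hs := hL.sup ih
    have : (Lq φ Fb a ⊔ chi φ Fb s) = fun y => max (Lq φ Fb a y) (chi φ Fb s y) := by
      funext y; rfl
    rwa [this] at hs

lemma chi_ge (φ : ℝ → ℝ) (Fb : Set ℝ) (Q : Finset ℚ) (y : ℝ) : φ y ≤ chi φ Fb Q y :=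
  (Finset.le_fold_max _).2 (Or.inl le_rfl)

lemma chi_le {φ : ℝ → ℝ} {Fb : Set ℝ} {Q : Finset ℚ} {y M : ℝ}
    (hb : φ y ≤ M) (h : ∀ q ∈ Q, Lq φ Fb q y ≤ M) : chi φ Fb Q y ≤ M :=
  (Finset.fold_max_le _).2 ⟨hb, h⟩

lemma Lq_le_phi {φ : ℝ → ℝ} (hφ : ConvexOn ℝ univ φ) {Fb : Set ℝ} (hFb : IsClosed Fb)
    (q : ℚ) {y : ℝ} (hy : ∀ hv : Valid Fb (q:ℝ), y ∉ Ioo (sF Fb (q:ℝ)) (tF Fb (q:ℝ))) :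
    Lq φ Fb q y ≤ φ y := by
  unfold Lq; split_ifs with hv
  · obtain ⟨hg, h1, h2⟩ := valid_gap hFb hv
    have hcd : sF Fb (q:ℝ) < tF Fb (q:ℝ) := h1.trans h2
    have := hy hv
    rw [mem_Ioo, not_and_or, not_lt, not_lt] at this
    exact chord_le_outside hφ hcd this
  · exact le_rfl

lemma chi_eq_phi {φ : ℝ → ℝ} (hφ : ConvexOn ℝ univ φ) {Fb : Set ℝ} (hFb : IsClosed Fb)
    (Q : Finset ℚ) {y : ℝ}
    (h : ∀ q ∈ Q, ∀ hv : Valid Fb (q:ℝ), y ∉ Ioo (sF Fb (q:ℝ)) (tF Fb (q:ℝ))) :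
    chi φ Fb Q y = φ y :=
  le_antisymm (chi_le le_rfl fun q hq => Lq_le_phi hφ hFb q (h q hq)) (chi_ge φ Fb Q y)

lemma chi_eq_phi_of_mem {φ : ℝ → ℝ} (hφ : ConvexOn ℝ univ φ) {Fb : Set ℝ} (hFb : IsClosed Fb)
    (Q : Finset ℚ) {y : ℝ} (hy : y ∈ Fb) : chi φ Fb Q y = φ y := by
  apply chi_eq_phi hφ hFb Q
  intro q hq hv hIoo
  exact ((valid_gap hFb hv).1.2.2.2 y hIoo) hy

lemma chi_eq_chord {φ : ℝ → ℝ} (hφ : ConvexOn ℝ univ φ) {Fb : Set ℝ} (hFb : IsClosed Fb)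
    {Q : Finset ℚ} {q : ℚ} (hq : q ∈ Q) (hv : Valid Fb (q:ℝ)) {y : ℝ}
    (hy : y ∈ Icc (sF Fb (q:ℝ)) (tF Fb (q:ℝ))) :
    chi φ Fb Q y = chord φ (sF Fb (q:ℝ)) (tF Fb (q:ℝ)) y := by
  obtain ⟨hg, h1, h2⟩ := valid_gap hFb hv
  have hcd : sF Fb (q:ℝ) < tF Fb (q:ℝ) := h1.trans h2
  have hin : φ y ≤ chord φ (sF Fb (q:ℝ)) (tF Fb (q:ℝ)) y := chord_ge_inside hφ hcd hy.1 hy.2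
  apply le_antisymm
  · apply chi_le hin
    intro q' hq'
    unfold Lq; split_ifs with hv'
    · obtain ⟨hg', h1', h2'⟩ := valid_gap hFb hv'
      by_cases hy' : y ∈ Ioo (sF Fb (q':ℝ)) (tF Fb (q':ℝ))
      · rcases eq_or_lt_of_le hy.1 with he | hlt1
        · exact absurd (he ▸ hg.1) (hg'.2.2.2 y hy')
        rcases eq_or_lt_of_le hy.2 with he | hlt2
        · exact absurd (he ▸ hg.2.1) (hg'.2.2.2 y hy')
        obtain ⟨hc, hd⟩ := gapOf_eq_of_mem hg' hg hy' ⟨hlt1, hlt2⟩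
        rw [hc, hd]
      · rw [mem_Ioo, not_and_or, not_lt, not_lt] at hy'
        exact (chord_le_outside hφ (h1'.trans h2') hy').trans hin
    · exact hin
  · exact le_trans (le_of_eq rfl) (by
      have : Lq φ Fb q y = chord φ (sF Fb (q:ℝ)) (tF Fb (q:ℝ)) y := by
        unfold Lq; rw [if_pos hv]
      calc chord φ (sF Fb (q:ℝ)) (tF Fb (q:ℝ)) y = Lq φ Fb q y := this.symm
        _ ≤ chi φ Fb Q y := (Finset.le_fold_max _).2 (Or.inr ⟨q, hq, le_rfl⟩))

lemma Lq_continuous {φ : ℝ → ℝ} (hφc : Continuous φ) (Fb : Set ℝ) (q : ℚ) :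
    Continuous (Lq φ Fb q) := by
  unfold Lq; split_ifs with hv
  · unfold chord
    exact continuous_const.add (continuous_const.mul (continuous_id.sub continuous_const))
  · exact hφc

lemma chi_continuous {φ : ℝ → ℝ} (hφc : Continuous φ) (Fb : Set ℝ) (Q : Finset ℚ) :
    Continuous (chi φ Fb Q) := by
  induction Q using Finset.induction with
  | empty =>
    have h0 : chi φ Fb ∅ = φ := by funext y; simp [chi]
    rw [h0]; exact hφc
  | @insert a s h ih =>
    have he : chi φ Fb (insert a s) = fun y => max (Lq φ Fb a y) (chi φ Fb s y) := by
      funext y; exact chi_apply_insert φ Fb h y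
    rw [he]
    exact (Lq_continuous hφc Fb a).max ih

lemma Lq_bound {φ : ℝ → ℝ} (hφ : ConvexOn ℝ univ φ) {Fb : Set ℝ} (hFb : IsClosed Fb) (q : ℚ) :
    ∃ C : ℝ, 0 ≤ C ∧ ∀ y, Lq φ Fb q y ≤ φ y + C := by
  unfold Lq; split_ifs with hv
  · obtain ⟨hg, h1, h2⟩ := valid_gap hFb hv
    set c := sF Fb (q:ℝ); set d := tF Fb (q:ℝ)
    have hcd : c < d := h1.trans h2
    have hcont : ContinuousOn (fun y => chord φ c d y - φ y) (Icc c d) :=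
      ((continuous_const.add (continuous_const.mul
        (continuous_id.sub continuous_const))).sub (convex_continuous hφ)).continuousOn
    obtain ⟨C, hC⟩ := (isCompact_Icc (a := c) (b := d)).exists_bound_of_continuousOn hcont
    refine ⟨max C 0, le_max_right _ _, ?_⟩
    intro y
    by_cases hy : y ∈ Icc c d
    · have := (hC y hy)
      have h1 := (abs_le.1 (by simpa using this)).2
      linarith [le_max_left C 0]
    · rw [mem_Icc, not_and_or, not_le, not_le] at hy
      have : chord φ c d y ≤ φ y := chord_le_outside hφ hcd (hy.imp le_of_lt le_of_lt)
      linarith [le_max_right C 0]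
  · exact ⟨0, le_rfl, fun y => by simp⟩

lemma chi_bound {φ : ℝ → ℝ} (hφ : ConvexOn ℝ univ φ) {Fb : Set ℝ} (hFb : IsClosed Fb)
    (Q : Finset ℚ) : ∃ C : ℝ, 0 ≤ C ∧ ∀ y, chi φ Fb Q y ≤ φ y + C := by
  induction Q using Finset.induction with
  | empty => exact ⟨0, le_rfl, fun y => by simp [chi]⟩
  | @insert a s h ih =>
    obtain ⟨C, hC0, hC⟩ := ih
    obtain ⟨D, hD0, hD⟩ := Lq_bound hφ hFb a
    refine ⟨max C D, le_trans hC0 (le_max_left _ _), ?_⟩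
    intro y
    rw [chi_apply_insert φ Fb h y]
    apply max_le
    · exact (hD y).trans (by linarith [le_max_right C D])
    · exact (hC y).trans (by linarith [le_max_left C D])

end ShadowAux

namespace ShadowAux


def Good (F : Set ℝ) (x : ℝ) : Prop :=
  x ∈ F ∨ (sF F x ∈ F ∧ tF F x ∈ F ∧ sF F x < x ∧ x < tF F x ∧
    0 ≤ rF F x ∧ 0 ≤ rF' F x ∧ rF F x + rF' F x = 1 ∧
    rF F x * sF F x + rF' F x * tF F x = x ∧
    ∀ z ∈ Ioo (sF F x) (tF F x), z ∉ F)

lemma good_of {F : Set ℝ} (hF : IsClosed F) {x : ℝ} (h1 : x ∉ F)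
    (h2 : (F ∩ Iic x).Nonempty) (h3 : (F ∩ Ici x).Nonempty) : Good F x := by
  obtain ⟨hg, hlt1, hlt2⟩ := valid_gap hF ⟨h1, h2, h3⟩
  right
  have hba : (0:ℝ) < tF F x - sF F x := by linarith
  refine ⟨hg.1, hg.2.1, hlt1, hlt2, ?_, ?_, ?_, ?_, hg.2.2.2⟩
  · exact div_nonneg (by linarith) hba.le
  · exact div_nonneg (by linarith) hba.le
  · rw [rF, rF']; field_simp; ring
  · rw [rF, rF']; field_simp; ring

open Classical in
noncomputable def Aop (F : Set ℝ) (f : ℝ → ℝ) (x : ℝ) : ℝ :=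
  if x ∈ F then f x else rF F x * f (sF F x) + rF' F x * f (tF F x)

lemma measurable_Aop {F : Set ℝ} (hF : IsClosed F) {f : ℝ → ℝ} (hf : Measurable f) :
    Measurable (Aop F f) := by
  unfold Aop
  apply Measurable.ite hF.measurableSet hf
  exact ((measurable_rF F hF).mul (hf.comp (measurable_sF F hF))).add
    ((measurable_rF' F hF).mul (hf.comp (measurable_tF F hF)))

lemma max_sub_max (a : ℝ) : max a 0 - max (-a) 0 = a := by
  rcases le_total a 0 with h | h
  · rw [max_eq_right h, max_eq_left (by linarith)]; ring
  · rw [max_eq_left h, max_eq_right (by linarith)]; ring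

lemma Aop_split (F : Set ℝ) (f : ℝ → ℝ) (x : ℝ) :
    Aop F f x = Aop F (fun y => max (f y) 0) x - Aop F (fun y => max (-f y) 0) x := by
  unfold Aop
  split_ifs with h
  · rw [max_sub_max]
  · have h1 := max_sub_max (f (sF F x))
    have h2 := max_sub_max (f (tF F x))
    linear_combination (-(rF F x)) * h1 + (-(rF' F x)) * h2

lemma Aop_nonneg {F : Set ℝ} {f : ℝ → ℝ} (hf0 : 0 ≤ f) {x : ℝ} (hx : Good F x) :
    0 ≤ Aop F f x := by
  unfold Aop
  split_ifs with h
  · exact hf0 _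
  · rcases hx with h' | ⟨_, _, _, _, hr, hr', _, _, _⟩
    · exact absurd h' h
    · exact add_nonneg (mul_nonneg hr (hf0 _)) (mul_nonneg hr' (hf0 _))

open Classical in
lemma lintegral_dilate_ofReal {F : Set ℝ} (hF : IsClosed F) (μ : Measure ℝ) {f : ℝ → ℝ}
    (hf : Measurable f) (hf0 : 0 ≤ f) (hae : ∀ᵐ x ∂μ, Good F x) :
    ∫⁻ y, ENNReal.ofReal (f y) ∂(dilate μ F) = ∫⁻ x, ENNReal.ofReal (Aop F f x) ∂μ := by
  rw [lintegral_dilate F hF μ hf.ennreal_ofReal]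
  apply lintegral_congr_ae
  filter_upwards [hae] with x hx
  unfold Aop
  split_ifs with h
  · rfl
  · rcases hx with h' | ⟨_, _, _, _, hr, hr', _, _, _⟩
    · exact absurd h' h
    · rw [ENNReal.ofReal_add (mul_nonneg hr (hf0 _)) (mul_nonneg hr' (hf0 _)),
        ENNReal.ofReal_mul hr, ENNReal.ofReal_mul hr']

lemma dilate_int {F : Set ℝ} (hF : IsClosed F) (μ : Measure ℝ)
    {f : ℝ → ℝ} (hf : Measurable f) (hae : ∀ᵐ x ∂μ, Good F x)
    (hfi : Integrable f (dilate μ F)) :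
    Integrable (Aop F f) μ ∧ ∫ x, Aop F f x ∂μ = ∫ y, f y ∂(dilate μ F) := by
  set fp := fun y => max (f y) 0 with hfp
  set fm := fun y => max (-f y) 0 with hfm
  have hfpm : Measurable fp := hf.max measurable_const
  have hfmm : Measurable fm := hf.neg.max measurable_const
  have hfp0 : 0 ≤ fp := fun y => le_max_right _ _
  have hfm0 : 0 ≤ fm := fun y => le_max_right _ _
  have hlp := lintegral_dilate_ofReal hF μ hfpm hfp0 hae
  have hlm := lintegral_dilate_ofReal hF μ hfmm hfm0 hae
  have hfinp : ∫⁻ y, ENNReal.ofReal (fp y) ∂(dilate μ F) < ⊤ := by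
    refine lt_of_le_of_lt (lintegral_mono fun y => ?_) hfi.2
    rw [← ofReal_norm, Real.norm_eq_abs]
    exact ENNReal.ofReal_le_ofReal (by simp [hfp, abs_nonneg, le_abs_self])
  have hfinm : ∫⁻ y, ENNReal.ofReal (fm y) ∂(dilate μ F) < ⊤ := by
    refine lt_of_le_of_lt (lintegral_mono fun y => ?_) hfi.2
    rw [← ofReal_norm, Real.norm_eq_abs]
    refine ENNReal.ofReal_le_ofReal ?_
    simp only [hfm]
    exact max_le (neg_le_abs _) (abs_nonneg _)
  have haep : 0 ≤ᵐ[μ] Aop F fp := hae.mono fun x hx => Aop_nonneg hfp0 hx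
  have haem : 0 ≤ᵐ[μ] Aop F fm := hae.mono fun x hx => Aop_nonneg hfm0 hx
  have hintp : Integrable (Aop F fp) μ := by
    refine ⟨(measurable_Aop hF hfpm).aestronglyMeasurable, ?_⟩
    rw [hasFiniteIntegral_iff_ofReal haep, ← hlp]
    exact hfinp
  have hintm : Integrable (Aop F fm) μ := by
    refine ⟨(measurable_Aop hF hfmm).aestronglyMeasurable, ?_⟩
    rw [hasFiniteIntegral_iff_ofReal haem, ← hlm]
    exact hfinm
  have hiAp : ∫ x, Aop F fp x ∂μ = ∫ y, fp y ∂(dilate μ F) := by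
    rw [integral_eq_lintegral_of_nonneg_ae haep (measurable_Aop hF hfpm).aestronglyMeasurable,
      integral_eq_lintegral_of_nonneg_ae (Eventually.of_forall hfp0)
        hfpm.aestronglyMeasurable, hlp]
  have hiAm : ∫ x, Aop F fm x ∂μ = ∫ y, fm y ∂(dilate μ F) := by
    rw [integral_eq_lintegral_of_nonneg_ae haem (measurable_Aop hF hfmm).aestronglyMeasurable,
      integral_eq_lintegral_of_nonneg_ae (Eventually.of_forall hfm0)
        hfmm.aestronglyMeasurable, hlm]
  have hsplit : Aop F f = fun x => Aop F fp x - Aop F fm x := by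
    funext x; exact Aop_split F f x
  have hint : Integrable (Aop F f) μ := by rw [hsplit]; exact hintp.sub hintm
  refine ⟨hint, ?_⟩
  rw [hsplit, integral_sub hintp hintm, hiAp, hiAm, ← integral_sub hfi.pos_part hfi.neg_part]
  congr 1
  funext y
  exact max_sub_max (f y)

lemma isFiniteMeasure_dilate {F : Set ℝ} (hF : IsClosed F) (μ : Measure ℝ)
    [IsFiniteMeasure μ] (hae : ∀ᵐ x ∂μ, Good F x) : IsFiniteMeasure (dilate μ F) := by
  constructor
  have h1 : (dilate μ F) univ = ∫⁻ y, (1:ℝ≥0∞) ∂(dilate μ F) := by rw [lintegral_one]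
  rw [h1, lintegral_dilate F hF μ measurable_const]
  refine lt_of_le_of_lt (lintegral_mono_ae ?_)
    (by rw [lintegral_one]; exact measure_lt_top μ univ)
  filter_upwards [hae] with x hx
  split_ifs with h
  · exact le_rfl
  · rcases hx with h' | ⟨_, _, _, _, hr, hr', hsum, _, _⟩
    · exact absurd h' h
    · rw [mul_one, mul_one, ← ENNReal.ofReal_add hr hr', hsum, ENNReal.ofReal_one]

lemma dilate_conc {F : Set ℝ} (hF : IsClosed F) (μ : Measure ℝ)
    (hae : ∀ᵐ x ∂μ, Good F x) : ∀ᵐ y ∂(dilate μ F), y ∈ F := by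
  have hsm : MeasurableSet Fᶜ := hF.measurableSet.compl
  have hz : (dilate μ F) Fᶜ = 0 := by
    rw [dilate, Measure.bind_apply hsm (measurable_kk F hF).aemeasurable]
    have : ∀ᵐ x ∂μ, kellererKernel F x Fᶜ = 0 := by
      filter_upwards [hae] with x hx
      rw [kk_def]
      split_ifs with h
      · rw [Measure.dirac_apply' _ hsm]
        simp [h]
      · rcases hx with h' | ⟨hs, ht, _, _, _, _, _, _, _⟩
        · exact absurd h' h
        · simp only [Measure.add_apply, Measure.smul_apply, smul_eq_mul,
            Measure.dirac_apply' _ hsm]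
          simp [hs, ht]
    rw [lintegral_congr_ae this, lintegral_zero]
  exact ae_iff.2 hz

lemma integrable_base {F : Set ℝ} (hF : IsClosed F) (μ : Measure ℝ) [IsFiniteMeasure μ]
    {φ : ℝ → ℝ} (hφ : ConvexOn ℝ univ φ) (hmom : Integrable (fun y => |y|) μ)
    (hae : ∀ᵐ x ∂μ, Good F x) (hfi : Integrable φ (dilate μ F)) : Integrable φ μ := by
  have hφm : Measurable φ := (convex_continuous hφ).measurable
  set fp := fun y => max (φ y) 0 with hfp
  have hfpm : Measurable fp := hφm.max measurable_const
  have hfp0 : 0 ≤ fp := fun y => le_max_right _ _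
  have hintp : Integrable (Aop F fp) μ :=
    (dilate_int hF μ hfpm hae hfi.pos_part).1
  obtain ⟨C, hC0, hC⟩ := convex_lower hφ
  have hbound : Integrable (fun x => Aop F fp x + (C * |x| + |φ 0|)) μ :=
    hintp.add ((hmom.const_mul C).add (integrable_const _))
  apply Integrable.mono' hbound hφm.aestronglyMeasurable
  filter_upwards [hae] with x hx
  rw [Real.norm_eq_abs, abs_le]
  constructor
  · have := hC x
    have hA : 0 ≤ Aop F fp x := Aop_nonneg hfp0 hx
    have : -(C * |x| + |φ 0|) ≤ φ x := by
      have habs : -|φ 0| ≤ φ 0 := neg_abs_le _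
      linarith
    linarith
  · have hup : φ x ≤ Aop F fp x := by
      unfold Aop
      split_ifs with h
      · exact le_max_left _ _
      · rcases hx with h' | ⟨hs, ht, hl1, hl2, hr, hr', hsum, hcombo, _⟩
        · exact absurd h' h
        · have hconv := hφ.2 (mem_univ (sF F x)) (mem_univ (tF F x)) hr hr' hsum
          simp only [smul_eq_mul] at hconv
          rw [hcombo] at hconv
          refine hconv.trans ?_
          have h1 : φ (sF F x) ≤ fp (sF F x) := le_max_left _ _
          have h2 : φ (tF F x) ≤ fp (tF F x) := le_max_left _ _
          exact add_le_add (mul_le_mul_of_nonneg_left h1 hr) (mul_le_mul_of_nonneg_left h2 hr')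
    have : 0 ≤ C * |x| + |φ 0| := by positivity
    linarith

end ShadowAux

namespace ShadowAux


lemma Aop_of_mem {F : Set ℝ} {f : ℝ → ℝ} {x : ℝ} (h : x ∈ F) : Aop F f x = f x := by
  unfold Aop; rw [if_pos h]

lemma Aop_of_not_mem {F : Set ℝ} {f : ℝ → ℝ} {x : ℝ} (h : x ∉ F) :
    Aop F f x = rF F x * f (sF F x) + rF' F x * f (tF F x) := by
  unfold Aop; rw [if_neg h]

lemma le_Aop {F : Set ℝ} {φ : ℝ → ℝ} (hφ : ConvexOn ℝ univ φ) {x : ℝ} (hx : Good F x) :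
    φ x ≤ Aop F φ x := by
  unfold Aop; split_ifs with h
  · exact le_rfl
  · rcases hx with h' | ⟨hs, ht, _, _, hr, hr', hsum, hcombo, _⟩
    · exact absurd h' h
    · have hconv := hφ.2 (mem_univ (sF F x)) (mem_univ (tF F x)) hr hr' hsum
      simp only [smul_eq_mul] at hconv
      rw [hcombo] at hconv
      exact hconv

end ShadowAux

namespace ShadowAux

variable {n : ℕ}

def Fst (F : Fin n → Set ℝ) (k : Fin n) : Set ℝ :=
  F k ∪ ⋃ (j : Fin n), ⋃ (hj : j.val + 1 ≤ k.val),
    {y | y ∈ F j ∧ ((¬ ∃ z ∈ F ⟨j.val + 1, lt_of_le_of_lt hj k.isLt⟩, z ≤ y) ∨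
      (¬ ∃ z ∈ F ⟨j.val + 1, lt_of_le_of_lt hj k.isLt⟩, y ≤ z))}

lemma F_k_subset_Fst (F : Fin n → Set ℝ) (k : Fin n) : F k ⊆ Fst F k :=
  subset_union_left

lemma anchor_le (F : Fin n → Set ℝ) (k : Fin n) :
    ∀ m : ℕ, ∀ j : Fin n, j ≤ k → k.val - j.val ≤ m →
    ∀ a ∈ F j, ∃ z ∈ Fst F k, z ≤ a := by
  intro m
  induction m with
  | zero =>
    intro j hj hm a ha
    have hje : j = k := Fin.ext (by have := Fin.le_def.1 hj; omega)
    exact ⟨a, Or.inl (hje ▸ ha), le_rfl⟩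
  | succ m ih =>
    intro j hjk hm a ha
    by_cases hjeq : j = k
    · exact ⟨a, Or.inl (hjeq ▸ ha), le_rfl⟩
    · have hlt : j.val + 1 ≤ k.val := by
        have h1 : j.val ≤ k.val := Fin.le_def.1 hjk
        have h2 : j.val ≠ k.val := fun h => hjeq (Fin.ext h)
        omega
      set j' : Fin n := ⟨j.val + 1, lt_of_le_of_lt hlt k.isLt⟩ with hj'
      by_cases hz : ∃ z ∈ F j', z ≤ a
      · obtain ⟨z, hzF, hza⟩ := hz
        obtain ⟨w, hw, hwz⟩ := ih j' (Fin.le_def.2 hlt) (by show k.val - (j.val + 1) ≤ m; omega) z hzF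
        exact ⟨w, hw, hwz.trans hza⟩
      · refine ⟨a, Or.inr ?_, le_rfl⟩
        exact mem_iUnion.2 ⟨j, mem_iUnion.2 ⟨hlt, ⟨ha, Or.inl hz⟩⟩⟩

lemma anchor_ge (F : Fin n → Set ℝ) (k : Fin n) :
    ∀ m : ℕ, ∀ j : Fin n, j ≤ k → k.val - j.val ≤ m →
    ∀ a ∈ F j, ∃ z ∈ Fst F k, a ≤ z := by
  intro m
  induction m with
  | zero =>
    intro j hj hm a ha
    have hje : j = k := Fin.ext (by have := Fin.le_def.1 hj; omega)
    exact ⟨a, Or.inl (hje ▸ ha), le_rfl⟩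
  | succ m ih =>
    intro j hjk hm a ha
    by_cases hjeq : j = k
    · exact ⟨a, Or.inl (hjeq ▸ ha), le_rfl⟩
    · have hlt : j.val + 1 ≤ k.val := by
        have h1 : j.val ≤ k.val := Fin.le_def.1 hjk
        have h2 : j.val ≠ k.val := fun h => hjeq (Fin.ext h)
        omega
      set j' : Fin n := ⟨j.val + 1, lt_of_le_of_lt hlt k.isLt⟩ with hj'
      by_cases hz : ∃ z ∈ F j', a ≤ z
      · obtain ⟨z, hzF, hza⟩ := hz
        obtain ⟨w, hw, hwz⟩ := ih j' (Fin.le_def.2 hlt) (by show k.val - (j.val + 1) ≤ m; omega) z hzF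
        exact ⟨w, hw, hza.trans hwz⟩
      · refine ⟨a, Or.inr ?_, le_rfl⟩
        exact mem_iUnion.2 ⟨j, mem_iUnion.2 ⟨hlt, ⟨ha, Or.inr hz⟩⟩⟩

lemma gap_disjoint (F : Fin n → Set ℝ) (k : Fin n)
    (hdec : ∀ i j : Fin n, i ≤ j → F j ⊆ F i) {i : Fin n} (hik : i ≤ k) {a b : ℝ}
    (ha : a ∈ F i) (hb : b ∈ F i) (hgap : ∀ z ∈ Ioo a b, z ∉ F i) :
    ∀ y ∈ Ioo a b, y ∉ Fst F k := by
  intro y hy hyFst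
  rcases hyFst with hyk | hyu
  · exact hgap y hy (hdec i k hik hyk)
  · obtain ⟨j, hj⟩ := mem_iUnion.1 hyu
    obtain ⟨hjk1, hyj, hdisj⟩ := mem_iUnion.1 hj
    rcases le_or_gt i j with hij | hji
    · exact hgap y hy (hdec i j hij hyj)
    · have hj'le : (⟨j.val + 1, lt_of_le_of_lt hjk1 k.isLt⟩ : Fin n) ≤ i :=
        by rw [Fin.le_def]; show j.val + 1 ≤ i.val; have := Fin.lt_def.1 hji; omega
      rcases hdisj with hnl | hnr
      · exact hnl ⟨a, hdec _ i hj'le ha, hy.1.le⟩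
      · exact hnr ⟨b, hdec _ i hj'le hb, hy.2.le⟩

lemma master_ae (μ : Fin n → Measure ℝ) (F : Fin n → Set ℝ) (k : Fin n)
    (hclosed : ∀ i, IsClosed (F i))
    (hdec : ∀ i j : Fin n, i ≤ j → F j ⊆ F i)
    (hwd : ∀ i, ∀ᵐ x ∂(μ i), x ∉ F i →
      ((F i ∩ Set.Iic x).Nonempty ∧ (F i ∩ Set.Ici x).Nonempty))
    (i : Fin n) (hik : i ≤ k) :
    ∀ᵐ x ∂μ i, x ∈ F i ∨ (Good (F i) x ∧ x ∉ F i ∧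
      Valid (closure (Fst F k)) x ∧
      GapOf (closure (Fst F k)) (sF (closure (Fst F k)) x) (tF (closure (Fst F k)) x) ∧
      sF (closure (Fst F k)) x < x ∧ x < tF (closure (Fst F k)) x ∧
      sF (closure (Fst F k)) x ≤ sF (F i) x ∧ tF (F i) x ≤ tF (closure (Fst F k)) x) := by
  filter_upwards [hwd i] with x hx
  by_cases hxF : x ∈ F i
  · exact Or.inl hxF
  right
  obtain ⟨h2, h3⟩ := hx hxF
  have hgood := good_of (hclosed i) hxF h2 h3
  have hstruct := hgood
  rcases hstruct with h | ⟨ha, hb, hl1, hl2, _, _, _, _, hgap⟩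
  · exact absurd h hxF
  set a := sF (F i) x
  set b := tF (F i) x
  have hdisj : ∀ y ∈ Ioo a b, y ∉ Fst F k := gap_disjoint F k hdec hik ha hb hgap
  have hdisj' : ∀ y ∈ Ioo a b, y ∉ closure (Fst F k) := by
    intro y hy hyc
    obtain ⟨z, hz1, hz2⟩ := mem_closure_iff.1 hyc (Ioo a b) isOpen_Ioo hy
    exact hdisj z hz1 hz2
  obtain ⟨z, hzFst, hza⟩ := anchor_le F k k.val i hik (by omega) a ha
  obtain ⟨w, hwFst, hbw⟩ := anchor_ge F k k.val i hik (by omega) b hb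
  have hv : Valid (closure (Fst F k)) x := by
    refine ⟨hdisj' x ⟨hl1, hl2⟩, ⟨z, subset_closure hzFst, hza.trans hl1.le⟩,
      ⟨w, subset_closure hwFst, hl2.le.trans hbw⟩⟩
  obtain ⟨hgapOf, hc1, hc2⟩ := valid_gap isClosed_closure hv
  refine ⟨hgood, hxF, hv, hgapOf, hc1, hc2, ?_, ?_⟩
  · -- sSup (Fbar ∩ Iic x) ≤ a
    apply csSup_le hv.2.1
    intro w' hw'
    by_contra hlt
    push_neg at hlt
    exact hdisj' w' ⟨hlt, lt_of_le_of_lt hw'.2 hl2⟩ hw'.1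
  · -- b ≤ sInf (Fbar ∩ Ici x)
    apply le_csInf hv.2.2
    intro w' hw'
    by_contra hlt
    push_neg at hlt
    exact hdisj' w' ⟨lt_of_lt_of_le hl1 hw'.2, hlt⟩ hw'.1

end ShadowAux


open ShadowAux in
theorem shadow_decomposition_finite
    (n : ℕ) (μ : Fin n → Measure ℝ) (F : Fin n → Set ℝ)
    (hfinm : ∀ i, IsFiniteMeasure (μ i))
    (hmom : ∀ i, Integrable (fun y => |y|) (μ i))
    (hclosed : ∀ i, IsClosed (F i))
    (hdec : ∀ i j : Fin n, i ≤ j → F j ⊆ F i)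
    (hwd : ∀ i, ∀ᵐ x ∂(μ i), x ∉ F i →
      ((F i ∩ Set.Iic x).Nonempty ∧ (F i ∩ Set.Ici x).Nonempty)) :
    ∀ k : Fin n,
      IsShadow (∑ i : Fin n, dilate (μ i) (F i))
        (∑ i ∈ Finset.Iic k, μ i)
        (∑ i ∈ Finset.Iic k, dilate (μ i) (F i)) := by
  intro k
  classical
  haveI := hfinm
  set ν : Fin n → Measure ℝ := fun i => dilate (μ i) (F i) with hνdef
  have hgood : ∀ i, ∀ᵐ x ∂μ i, Good (F i) x := by
    intro i
    filter_upwards [hwd i] with x hx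
    by_cases hxF : x ∈ F i
    · exact Or.inl hxF
    · exact good_of (hclosed i) hxF (hx hxF).1 (hx hxF).2
  have hfν : ∀ i, IsFiniteMeasure (ν i) := fun i =>
    isFiniteMeasure_dilate (hclosed i) (μ i) (hgood i)
  have hfin_sum : ∀ (s : Finset (Fin n)) (T : Fin n → Measure ℝ),
      (∀ i, IsFiniteMeasure (T i)) → IsFiniteMeasure (∑ i ∈ s, T i) := by
    intro s T hT
    constructor
    rw [Measure.finset_sum_apply]
    exact ENNReal.sum_lt_top.2 fun i _ => @measure_lt_top _ _ (T i) (hT i) _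
  have hle_sum : ∀ (s t : Finset (Fin n)) (T : Fin n → Measure ℝ), s ⊆ t →
      (∑ i ∈ s, T i) ≤ ∑ i ∈ t, T i := by
    intro s t T hst
    rw [Measure.le_iff]
    intro A hA
    rw [Measure.finset_sum_apply, Measure.finset_sum_apply]
    exact Finset.sum_le_sum_of_subset hst
  have hsingle_le : ∀ (s : Finset (Fin n)) (T : Fin n → Measure ℝ), ∀ i ∈ s,
      T i ≤ ∑ j ∈ s, T j := by
    intro s T i hi
    rw [Measure.le_iff]
    intro A hA
    rw [Measure.finset_sum_apply]
    exact Finset.single_le_sum (f := fun j => T j A) (fun _ _ => zero_le) hi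
  have hφmOf : ∀ {φ : ℝ → ℝ}, ConvexOn ℝ univ φ → Measurable φ := fun hφ =>
    (convex_continuous hφ).measurable
  refine ⟨?_, ?_, ?_⟩
  · -- ConvexOrder η ξ
    intro φ hφ hintη hintξ
    have hφm : Measurable φ := hφmOf hφ
    have hint_i : ∀ i ∈ Finset.Iic k, Integrable φ (μ i) := fun i hi =>
      hintη.mono_measure (hsingle_le _ _ i hi)
    have hint_νi : ∀ i ∈ Finset.Iic k, Integrable φ (ν i) := fun i hi =>
      hintξ.mono_measure (hsingle_le _ _ i hi)
    rw [integral_finset_sum_measure hint_i, integral_finset_sum_measure hint_νi]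
    apply Finset.sum_le_sum
    intro i hi
    obtain ⟨hAint, hAeq⟩ := dilate_int (hclosed i) (μ i) hφm (hgood i) (hint_νi i hi)
    rw [← hAeq]
    apply integral_mono_ae (hint_i i hi) hAint
    filter_upwards [hgood i] with x hx
    exact le_Aop hφ hx
  · -- ξ ≤ ν
    exact hle_sum (Finset.Iic k) Finset.univ ν (Finset.subset_univ _)
  · -- minimality
    intro ξ' hco hleν
    intro φ hφ hintξ hintξ'
    have hφm : Measurable φ := hφmOf hφ
    haveI hfinν : IsFiniteMeasure (∑ i : Fin n, ν i) := hfin_sum _ _ hfν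
    haveI : IsFiniteMeasure ξ' := isFiniteMeasure_of_le _ hleν
    haveI hfinη : IsFiniteMeasure (∑ i ∈ Finset.Iic k, μ i) := hfin_sum _ _ hfinm
    haveI hfinξ : IsFiniteMeasure (∑ i ∈ Finset.Iic k, ν i) := hfin_sum _ _ hfν
    set Fb : Set ℝ := closure (Fst F k) with hFbdef
    have hFbc : IsClosed Fb := isClosed_closure
    obtain ⟨e, he⟩ := exists_surjective_nat ℚ
    set QN : ℕ → Finset ℚ := fun N => (Finset.range N).image e with hQNdef
    set χ : ℕ → ℝ → ℝ := fun N => chi φ Fb (QN N) with hχdef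
    have hχconv : ∀ N, ConvexOn ℝ univ (χ N) := fun N => chi_convex hφ _ _
    have hχcont : ∀ N, Continuous (χ N) := fun N =>
      chi_continuous (convex_continuous hφ) _ _
    have hχm : ∀ N, Measurable (χ N) := fun N => (hχcont N).measurable
    have hχge : ∀ N y, φ y ≤ χ N y := fun N y => chi_ge φ Fb (QN N) y
    have hχint : ∀ N (θ : Measure ℝ), IsFiniteMeasure θ → Integrable φ θ →
        Integrable (χ N) θ := by
      intro N θ hθ hφθ
      obtain ⟨C, hC0, hC⟩ := chi_bound hφ hFbc (QN N)
      refine Integrable.mono' (hφθ.abs.add (integrable_const C))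
        ((hχm N).aestronglyMeasurable) (Eventually.of_forall fun y => ?_)
      show ‖χ N y‖ ≤ |φ y| + C
      rw [Real.norm_eq_abs, abs_le]
      constructor
      · have h1 := hχge N y
        have h2 : -|φ y| ≤ φ y := neg_abs_le _
        linarith
      · have h1 := hC y
        have h2 : φ y ≤ |φ y| := le_abs_self _
        linarith
    have hdiff_int : ∀ N (θ : Measure ℝ), IsFiniteMeasure θ →
        Integrable (fun y => χ N y - φ y) θ := by
      intro N θ hθ
      obtain ⟨C, hC0, hC⟩ := chi_bound hφ hFbc (QN N)
      refine Integrable.mono' (integrable_const C)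
        (((hχm N).sub hφm).aestronglyMeasurable) (Eventually.of_forall fun y => ?_)
      show ‖χ N y - φ y‖ ≤ C
      rw [Real.norm_eq_abs, abs_le]
      constructor
      · have := hχge N y; linarith
      · have := hC y; linarith
    have hφνi : ∀ i ∈ Finset.Iic k, Integrable φ (ν i) := fun i hi =>
      hintξ.mono_measure (hsingle_le _ _ i hi)
    have hφμi : ∀ i ∈ Finset.Iic k, Integrable φ (μ i) := fun i hi =>
      integrable_base (hclosed i) (μ i) hφ (hmom i) (hgood i) (hφνi i hi)
    have hφη : Integrable φ (∑ i ∈ Finset.Iic k, μ i) :=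
      integrable_finset_sum_measure.2 hφμi
    -- the D and g functions
    set g : Fin n → ℝ → ℝ := fun i x => Aop (F i) φ x - φ x with hgdef
    set D : Fin n → ℕ → ℝ → ℝ := fun i N x => Aop (F i) (χ N) x - χ N x with hDdef
    have hgint : ∀ i ∈ Finset.Iic k, Integrable (g i) (μ i) := fun i hi =>
      ((dilate_int (hclosed i) (μ i) hφm (hgood i) (hφνi i hi)).1).sub (hφμi i hi)
    -- the master pointwise facts
    have hmain : ∀ i ∈ Finset.Iic k, ∀ᵐ x ∂μ i,
        (∀ N, 0 ≤ D i N x ∧ D i N x ≤ g i x) ∧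
        Tendsto (fun N => D i N x) atTop (𝓝 0) := by
      intro i hi
      have hik : i ≤ k := Finset.mem_Iic.1 hi
      filter_upwards [master_ae μ F k hclosed hdec hwd i hik] with x hx
      rcases hx with hxF | ⟨hgood', hxnF, hv, hgapOf, hcx, hdx, hcsa, hbtd⟩
      · -- x ∈ F i : D = 0 and g = 0
        have hD0 : ∀ N, D i N x = 0 := by
          intro N
          show Aop (F i) (χ N) x - χ N x = 0
          rw [Aop_of_mem hxF, sub_self]
        have hg0 : g i x = 0 := by
          show Aop (F i) φ x - φ x = 0
          rw [Aop_of_mem hxF, sub_self]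
        constructor
        · intro N; rw [hD0 N, hg0]; exact ⟨le_rfl, le_rfl⟩
        · have : (fun N => D i N x) = fun _ => (0:ℝ) := funext hD0
          rw [this]; exact tendsto_const_nhds
      · rcases id hgood' with h' | ⟨ha, hb, hl1, hl2, hr, hr', hsum, hcombo, hgap⟩
        · exact absurd h' hxnF
        have hgg := hgood'
        -- abbreviations
        have hcxdx : sF Fb x < tF Fb x := hcx.trans hdx
        have haI : sF (F i) x ∈ Icc (sF Fb x) (tF Fb x) :=
          ⟨hcsa, hl1.le.trans (hl2.le.trans hbtd)⟩
        have hbI : tF (F i) x ∈ Icc (sF Fb x) (tF Fb x) :=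
          ⟨hcsa.trans (hl1.le.trans hl2.le), hbtd⟩
        have hxI : x ∈ Icc (sF Fb x) (tF Fb x) := ⟨hcx.le, hdx.le⟩
        -- covered case gives D = 0
        have hcovzero : ∀ N, (∃ q ∈ QN N, Valid Fb (q:ℝ) ∧ sF Fb (q:ℝ) = sF Fb x ∧
            tF Fb (q:ℝ) = tF Fb x) → D i N x = 0 := by
          intro N hcov
          obtain ⟨q, hq, hqv, hqc, hqd⟩ := hcov
          have hchord : ∀ y ∈ Icc (sF Fb x) (tF Fb x),
              χ N y = chord φ (sF Fb x) (tF Fb x) y := by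
            intro y hy
            have h0 := chi_eq_chord hφ hFbc hq hqv (y := y) (by rw [hqc, hqd]; exact hy)
            rw [hqc, hqd] at h0
            exact h0
          show Aop (F i) (χ N) x - χ N x = 0
          rw [Aop_of_not_mem hxnF, hchord _ haI, hchord _ hbI, hchord x hxI]
          simp only [chord]
          linear_combination ((φ (tF Fb x) - φ (sF Fb x)) / (tF Fb x - sF Fb x)) * hcombo
            + (φ (sF Fb x) - (φ (tF Fb x) - φ (sF Fb x)) / (tF Fb x - sF Fb x) * (sF Fb x)) * hsum
        -- uncovered case gives D = g
        have huncovg : ∀ N, ¬ (∃ q ∈ QN N, Valid Fb (q:ℝ) ∧ sF Fb (q:ℝ) = sF Fb x ∧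
            tF Fb (q:ℝ) = tF Fb x) → D i N x = g i x := by
          intro N hcov
          have huncov : ∀ y ∈ Icc (sF Fb x) (tF Fb x), χ N y = φ y := by
            intro y hy
            rcases eq_or_lt_of_le hy.1 with he | h1
            · exact chi_eq_phi_of_mem hφ hFbc _ (by rw [← he]; exact hgapOf.1)
            rcases eq_or_lt_of_le hy.2 with he | h2
            · exact chi_eq_phi_of_mem hφ hFbc _ (by rw [he]; exact hgapOf.2.1)
            apply chi_eq_phi hφ hFbc
            intro q hq hqv hyIoo
            obtain ⟨hgq, _, _⟩ := valid_gap hFbc hqv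
            obtain ⟨hce, hde⟩ := gapOf_eq_of_mem hgq hgapOf hyIoo ⟨h1, h2⟩
            exact hcov ⟨q, hq, hqv, hce, hde⟩
          show Aop (F i) (χ N) x - χ N x = g i x
          show Aop (F i) (χ N) x - χ N x = Aop (F i) φ x - φ x
          rw [Aop_of_not_mem hxnF, Aop_of_not_mem hxnF,
            huncov _ haI, huncov _ hbI, huncov x hxI]
        have hg0 : 0 ≤ g i x := by
          have := le_Aop hφ hgg
          show (0:ℝ) ≤ Aop (F i) φ x - φ x
          linarith
        constructor
        · intro N
          have hD0 : 0 ≤ D i N x := by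
            have := le_Aop (hχconv N) hgg
            show (0:ℝ) ≤ Aop (F i) (χ N) x - χ N x
            linarith
          refine ⟨hD0, ?_⟩
          by_cases hcov : ∃ q ∈ QN N, Valid Fb (q:ℝ) ∧ sF Fb (q:ℝ) = sF Fb x ∧
              tF Fb (q:ℝ) = tF Fb x
          · rw [hcovzero N hcov]; exact hg0
          · rw [huncovg N hcov]
        · -- tendsto
          obtain ⟨qh, hq1, hq2⟩ := exists_rat_btwn hcxdx
          obtain ⟨hqv, hqc, hqd⟩ := valid_of_mem_gap hFbc hgapOf
            (show (qh:ℝ) ∈ Ioo (sF Fb x) (tF Fb x) from ⟨hq1, hq2⟩)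
          obtain ⟨m, hm⟩ := he qh
          have hev : ∀ N ≥ m + 1, D i N x = 0 := by
            intro N hN
            apply hcovzero N
            refine ⟨qh, ?_, hqv, hqc, hqd⟩
            exact Finset.mem_image.2 ⟨m, Finset.mem_range.2 (by omega), hm⟩
          apply Tendsto.congr' _ tendsto_const_nhds
          filter_upwards [eventually_atTop.2 ⟨m + 1, hev⟩] with N hN
          exact hN.symm
    -- the per-N inequality
    have hineq : ∀ N, ∫ x, φ x ∂(∑ i ∈ Finset.Iic k, ν i)
        - ∑ i ∈ Finset.Iic k, ∫ x, D i N x ∂μ i ≤ ∫ x, φ x ∂ξ' := by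
      intro N
      have hχη : Integrable (χ N) (∑ i ∈ Finset.Iic k, μ i) := hχint N _ hfinη hφη
      have hχξ' : Integrable (χ N) ξ' := hχint N ξ' inferInstance hintξ'
      have hCO := hco (χ N) (hχconv N) hχη hχξ'
      have h1 : ∫ y, (χ N y - φ y) ∂ξ' ≤ ∫ y, (χ N y - φ y) ∂(∑ i : Fin n, ν i) := by
        apply integral_mono_measure hleν
        · exact Eventually.of_forall fun y => sub_nonneg.2 (hχge N y)
        · exact hdiff_int N _ hfinν
      have h2 : ∫ y, (χ N y - φ y) ∂(∑ i : Fin n, ν i)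
          = ∑ j : Fin n, ∫ y, (χ N y - φ y) ∂ν j :=
        integral_finset_sum_measure fun j _ => hdiff_int N _ (hfν j)
      have h3 : ∀ j : Fin n, j ∉ Finset.Iic k → ∫ y, (χ N y - φ y) ∂ν j = 0 := by
        intro j hj
        have hkj : k ≤ j := le_of_not_ge (fun h => hj (Finset.mem_Iic.2 h))
        apply integral_eq_zero_of_ae
        filter_upwards [dilate_conc (hclosed j) (μ j) (hgood j)] with y hy
        have hyFb : y ∈ Fb := subset_closure (F_k_subset_Fst F k (hdec k j hkj hy))
        show chi φ Fb (QN N) y - φ y = 0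
        rw [chi_eq_phi_of_mem hφ hFbc _ hyFb, sub_self]
      have h4 : ∑ j : Fin n, ∫ y, (χ N y - φ y) ∂ν j
          = ∑ j ∈ Finset.Iic k, ∫ y, (χ N y - φ y) ∂ν j := by
        symm
        apply Finset.sum_subset (Finset.subset_univ _)
        intro j _ hj
        exact h3 j hj
      have h5 : ∀ i ∈ Finset.Iic k, ∫ y, (χ N y - φ y) ∂ν i
          = ∫ x, Aop (F i) (χ N) x ∂μ i - ∫ x, Aop (F i) φ x ∂μ i := by
        intro i hi
        have hχνi : Integrable (χ N) (ν i) := hχint N _ (hfν i) (hφνi i hi)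
        obtain ⟨hAχint, hAχeq⟩ := dilate_int (hclosed i) (μ i) (hχm N) (hgood i) hχνi
        obtain ⟨hAφint, hAφeq⟩ := dilate_int (hclosed i) (μ i) hφm (hgood i) (hφνi i hi)
        rw [integral_sub hχνi (hφνi i hi), ← hAχeq, ← hAφeq]
      have h6 : ∫ y, χ N y ∂(∑ i ∈ Finset.Iic k, μ i)
          = ∑ i ∈ Finset.Iic k, ∫ y, χ N y ∂μ i :=
        integral_finset_sum_measure fun i hi => hχint N _ (hfinm i) (hφμi i hi)
      have h7 : ∫ y, φ y ∂(∑ i ∈ Finset.Iic k, ν i)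
          = ∑ i ∈ Finset.Iic k, ∫ y, φ y ∂ν i :=
        integral_finset_sum_measure hφνi
      have h8 : ∀ i ∈ Finset.Iic k, ∫ x, D i N x ∂μ i
          = ∫ x, Aop (F i) (χ N) x ∂μ i - ∫ y, χ N y ∂μ i := by
        intro i hi
        have hχνi : Integrable (χ N) (ν i) := hχint N _ (hfν i) (hφνi i hi)
        obtain ⟨hAχint, hAχeq⟩ := dilate_int (hclosed i) (μ i) (hχm N) (hgood i) hχνi
        have hχμi : Integrable (χ N) (μ i) := hχint N _ (hfinm i) (hφμi i hi)
        exact integral_sub hAχint hχμi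
      have h9 : ∀ i ∈ Finset.Iic k, ∫ x, Aop (F i) φ x ∂μ i = ∫ y, φ y ∂ν i := by
        intro i hi
        exact (dilate_int (hclosed i) (μ i) hφm (hgood i) (hφνi i hi)).2
      have h10 : ∫ y, (χ N y - φ y) ∂ξ' = ∫ y, χ N y ∂ξ' - ∫ y, φ y ∂ξ' :=
        integral_sub hχξ' hintξ'
      -- assemble
      have hsum1 : ∑ j ∈ Finset.Iic k, ∫ y, (χ N y - φ y) ∂ν j
          = ∑ i ∈ Finset.Iic k, (∫ x, Aop (F i) (χ N) x ∂μ i - ∫ x, Aop (F i) φ x ∂μ i) :=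
        Finset.sum_congr rfl h5
      have hsum2 : ∑ i ∈ Finset.Iic k, ∫ x, D i N x ∂μ i
          = ∑ i ∈ Finset.Iic k, (∫ x, Aop (F i) (χ N) x ∂μ i - ∫ y, χ N y ∂μ i) :=
        Finset.sum_congr rfl h8
      have hsum3 : ∑ i ∈ Finset.Iic k, ∫ y, φ y ∂ν i
          = ∑ i ∈ Finset.Iic k, ∫ x, Aop (F i) φ x ∂μ i :=
        Finset.sum_congr rfl fun i hi => (h9 i hi).symm
      rw [h7, hsum3, hsum2]
      rw [h10] at h1
      rw [h2, h4, hsum1] at h1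
      rw [h6] at hCO
      rw [Finset.sum_sub_distrib] at hsum1 ⊢
      rw [Finset.sum_sub_distrib] at h1
      linarith
    -- pass to the limit
    have hDlim : ∀ i ∈ Finset.Iic k, Tendsto (fun N => ∫ x, D i N x ∂μ i) atTop (𝓝 0) := by
      intro i hi
      have hmeas : ∀ N, AEStronglyMeasurable (D i N) (μ i) := by
        intro N
        have : Measurable (D i N) :=
          (measurable_Aop (hclosed i) (hχm N)).sub (hχm N)
        exact this.aestronglyMeasurable
      have hbd : ∀ N, ∀ᵐ x ∂μ i, ‖D i N x‖ ≤ g i x := by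
        intro N
        filter_upwards [hmain i hi] with x hx
        rw [Real.norm_eq_abs, abs_of_nonneg (hx.1 N).1]
        exact (hx.1 N).2
      have hlim : ∀ᵐ x ∂μ i, Tendsto (fun N => D i N x) atTop (𝓝 0) := by
        filter_upwards [hmain i hi] with x hx
        exact hx.2
      have := tendsto_integral_of_dominated_convergence (g i) hmeas (hgint i hi) hbd hlim
      simpa using this
    have hsumlim : Tendsto (fun N => ∑ i ∈ Finset.Iic k, ∫ x, D i N x ∂μ i)
        atTop (𝓝 0) := by
      have h0 : (0:ℝ) = ∑ i ∈ Finset.Iic k, (0:ℝ) := by simp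
      rw [h0]
      exact tendsto_finset_sum _ hDlim
    have hfinal : Tendsto (fun N => ∫ x, φ x ∂(∑ i ∈ Finset.Iic k, ν i)
        - ∑ i ∈ Finset.Iic k, ∫ x, D i N x ∂μ i) atTop
        (𝓝 (∫ x, φ x ∂(∑ i ∈ Finset.Iic k, ν i))) := by
      have hconst : Tendsto (fun _ : ℕ => ∫ x, φ x ∂(∑ i ∈ Finset.Iic k, ν i)) atTop
          (𝓝 (∫ x, φ x ∂(∑ i ∈ Finset.Iic k, ν i))) := tendsto_const_nhds
      have h2 := hconst.sub hsumlim
      simpa using h2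
    exact le_of_tendsto hfinal (Eventually.of_forall hineq)
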